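/- Let (β_m)_{m≥1} be real numbers with 4^m·β_m → 0 as m → ∞, and set c_m = cos 2β_m. Then for all sufficiently large m: S⁻_{c_m} has a unique fixed point p_m in [0,1]; moreover 16^m·p_m → 0 as m → ∞, and the derivative of S⁻_{c_m} at p_m lies in the interval [(1/4)(1 − 4^{−m}), (1/4)(1 + 4^{−m})]. -/

import Mathlib

/-!
With `u = 1 - w` the fixed-point equation of `S⁻_c` reads `√2 u = √(1 + c u)`, i.e. `2u² = c u + 1`
with `u ≥ 0`; its only nonnegative root is `u = (c + √(c² + 8))/4`, at which the derivative of
`S⁻_c` equals `c/(4u) = c/(c + √(c² + 8))`. For `c ≤ 1` the fixed point is at most `(1 - c)/2`,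
and for `0 ≤ c ≤ 1` the derivative lies within `1 - c` below `1/4`. Since `1 - cos 2β ≤ 2β²` and
`β_m = o(4^{-m})`, both errors are `o(16^{-m})`.
-/

noncomputable def Sminus (c w : ℝ) : ℝ := 1 - (Real.sqrt 2)⁻¹ * Real.sqrt (1 + (1 - w) * c)

open Filter Set

lemma one_sub_cos_two_mul_le (x : ℝ) : 1 - Real.cos (2 * x) ≤ 2 * x ^ 2 := by
  nlinarith [Real.one_sub_sq_div_two_le_cos (x := 2 * x)]

lemma one_sub_cos_two_mul_le_of_abs_mul_le {a x : ℝ} (ha : 1 ≤ a) (h : |a * x| ≤ 1 / 4) :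
    1 - Real.cos (2 * x) ≤ a⁻¹ / 4 := by
  have ha₀ : 0 < a := by linarith
  have hax : (a * x) ^ 2 ≤ (1 / 4) ^ 2 := by
    rw [← sq_abs]
    exact pow_le_pow_left₀ (abs_nonneg _) h 2
  calc 1 - Real.cos (2 * x) ≤ 2 * x ^ 2 := one_sub_cos_two_mul_le x
    _ = 2 * (a * x) ^ 2 / a ^ 2 := by field_simp
    _ ≤ 2 * (1 / 4) ^ 2 / a ^ 2 := by gcongr
    _ ≤ a⁻¹ / 4 := by
      rw [div_le_iff₀ (by positivity)]
      field_simp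
      nlinarith

section SqrtSqAddEight

lemma sq_sqrt_sq_add_eight (c : ℝ) : √(c ^ 2 + 8) ^ 2 = c ^ 2 + 8 :=
  Real.sq_sqrt (by positivity)

lemma abs_le_sqrt_sq_add_eight (c : ℝ) : |c| ≤ √(c ^ 2 + 8) :=
  Real.abs_le_sqrt (by linarith)

variable {c : ℝ}

lemma two_add_le_sqrt_sq_add_eight (hc : c ≤ 1) : 2 + c ≤ √(c ^ 2 + 8) :=
  Real.le_sqrt_of_sq_le (by nlinarith)

lemma sqrt_sq_add_eight_le (hc : c ≤ 1) : √(c ^ 2 + 8) ≤ 4 - c :=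
  (Real.sqrt_le_left (by linarith)).2 (by nlinarith)

lemma div_add_sqrt_sq_add_eight_mem_Icc (hc₀ : 0 ≤ c) (hc₁ : c ≤ 1) :
    c / (c + √(c ^ 2 + 8)) ∈ Icc (1 / 4 - (1 - c)) (1 / 4) := by
  have hs := sqrt_sq_add_eight_le hc₁
  have hs₂ := sq_sqrt_sq_add_eight c
  have hpos : 0 < c + √(c ^ 2 + 8) := by positivity
  constructor
  · rw [le_div_iff₀ hpos]
    nlinarith
  · rw [div_le_iff₀ hpos]
    nlinarith [Real.sqrt_nonneg (c ^ 2 + 8)]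

end SqrtSqAddEight

namespace Sminus

noncomputable def fixedPoint (c : ℝ) : ℝ := 1 - (c + √(c ^ 2 + 8)) / 4

variable (c : ℝ)

lemma one_sub_fixedPoint : 1 - fixedPoint c = (c + √(c ^ 2 + 8)) / 4 := by
  rw [fixedPoint, sub_sub_cancel]

lemma one_sub_fixedPoint_nonneg : 0 ≤ 1 - fixedPoint c := by
  rw [one_sub_fixedPoint]
  linarith [neg_abs_le c, abs_le_sqrt_sq_add_eight c]

lemma one_add_one_sub_fixedPoint_mul :
    1 + (1 - fixedPoint c) * c = 2 * (1 - fixedPoint c) ^ 2 := by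
  rw [one_sub_fixedPoint]
  linear_combination (-1 / 8 : ℝ) * sq_sqrt_sq_add_eight c

lemma sqrt_one_add_one_sub_fixedPoint_mul :
    √(1 + (1 - fixedPoint c) * c) = √2 * (1 - fixedPoint c) := by
  rw [one_add_one_sub_fixedPoint_mul, Real.sqrt_mul zero_le_two,
    Real.sqrt_sq (one_sub_fixedPoint_nonneg c)]

lemma apply_fixedPoint : Sminus c (fixedPoint c) = fixedPoint c := by
  rw [Sminus, sqrt_one_add_one_sub_fixedPoint_mul, inv_mul_cancel_left₀ (by positivity)]
  ring

lemma eq_fixedPoint_of_apply_eq {q : ℝ} (hq : Sminus c q = q) : q = fixedPoint c := by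
  set v := 1 - q
  have hv : √(1 + v * c) = √2 * v := by
    rw [← inv_mul_eq_iff_eq_mul₀ (by positivity)]
    rw [Sminus] at hq
    linarith
  have hv₀ : 0 ≤ v :=
    (mul_nonneg_iff_of_pos_left (by positivity)).1 (hv ▸ Real.sqrt_nonneg _)
  have hroot : 2 * v ^ 2 = 1 + v * c := by
    have hsq := congrArg (· ^ 2) hv
    by_cases hpos : 0 ≤ 1 + v * c
    · simp only [Real.sq_sqrt hpos, mul_pow, Real.sq_sqrt zero_le_two] at hsq
      linarith
    · -- a negative radicand forces `v = 0`, which makes it `1`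
      rw [Real.sqrt_eq_zero_of_nonpos (by linarith)] at hv
      have : v = 0 := by simpa using hv.symm
      simp [this] at hpos
  -- the other root `(c - √(c² + 8))/4` of `2x² - cx - 1` is negative
  have hs := abs_le_sqrt_sq_add_eight c
  have hs₂ := sq_sqrt_sq_add_eight c
  have : v = 1 - fixedPoint c := by
    rw [one_sub_fixedPoint]
    nlinarith [le_abs_self c, sq_nonneg (v - (c + √(c ^ 2 + 8)) / 4),
      sq_nonneg (v + (c + √(c ^ 2 + 8)) / 4)]
  linarith

lemma deriv_at_fixedPoint_eq :
    c / (2 * √2 * √(1 + (1 - fixedPoint c) * c)) = c / (c + √(c ^ 2 + 8)) := by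
  rw [sqrt_one_add_one_sub_fixedPoint_mul, one_sub_fixedPoint, ← mul_assoc, mul_assoc 2,
    Real.mul_self_sqrt zero_le_two]
  ring_nf

variable {c}

lemma fixedPoint_mem_Icc (hc : c ≤ 1) : fixedPoint c ∈ Icc 0 1 := by
  constructor
  · rw [fixedPoint]
    linarith [sqrt_sq_add_eight_le hc]
  · linarith [one_sub_fixedPoint_nonneg c]

lemma fixedPoint_le (hc : c ≤ 1) : fixedPoint c ≤ (1 - c) / 2 := by
  rw [fixedPoint]
  linarith [two_add_le_sqrt_sq_add_eight hc]

lemma fixedPoint_cos_two_mul_le (x : ℝ) : fixedPoint (Real.cos (2 * x)) ≤ x ^ 2 := by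
  linarith [fixedPoint_le (Real.cos_le_one (2 * x)), one_sub_cos_two_mul_le x]

end Sminus

/-- If `4^m·β_m → 0` and `c_m = cos 2β_m`, then for all sufficiently large `m` the map
`S⁻_{c_m}` has a unique fixed point `p_m` in `[0,1]`; moreover `16^m·p_m → 0` and the
derivative `c_m/(2√2·√(1 + (1 − p_m)c_m))` of `S⁻_{c_m}` at `p_m` lies in
`[(1/4)(1 − 4^{−m}), (1/4)(1 + 4^{−m})]`. -/
theorem stmt14 (β : ℕ → ℝ)
    (hβ : Filter.Tendsto (fun m => (4 : ℝ) ^ m * β m) Filter.atTop (nhds 0)) :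
    ∃ (N : ℕ) (p : ℕ → ℝ),
      (∀ m, N ≤ m →
        p m ∈ Set.Icc (0 : ℝ) 1 ∧
        Sminus (Real.cos (2 * β m)) (p m) = p m ∧
        (∀ q ∈ Set.Icc (0 : ℝ) 1, Sminus (Real.cos (2 * β m)) q = q → q = p m) ∧
        Real.cos (2 * β m) /
            (2 * Real.sqrt 2 * Real.sqrt (1 + (1 - p m) * Real.cos (2 * β m))) ∈
          Set.Icc ((1 / 4) * (1 - ((4 : ℝ) ^ m)⁻¹)) ((1 / 4) * (1 + ((4 : ℝ) ^ m)⁻¹))) ∧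
      Filter.Tendsto (fun m => (16 : ℝ) ^ m * p m) Filter.atTop (nhds 0) := by
  obtain ⟨N, hN⟩ := eventually_atTop.1 <| hβ.eventually <|
    Metric.closedBall_mem_nhds (0 : ℝ) (by norm_num : (0 : ℝ) < 1 / 4)
  refine ⟨N, fun m => Sminus.fixedPoint (Real.cos (2 * β m)), fun m hm => ?_, ?_⟩
  · have hc₁ := Real.cos_le_one (2 * β m)
    have hc : 1 - Real.cos (2 * β m) ≤ ((4 : ℝ) ^ m)⁻¹ / 4 :=
      one_sub_cos_two_mul_le_of_abs_mul_le (one_le_pow₀ (by norm_num)) (by simpa using hN m hm)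
    have h4 : ((4 : ℝ) ^ m)⁻¹ ≤ 1 := inv_le_one_of_one_le₀ (one_le_pow₀ (by norm_num))
    refine ⟨Sminus.fixedPoint_mem_Icc hc₁, Sminus.apply_fixedPoint _,
      fun q _ hq => Sminus.eq_fixedPoint_of_apply_eq _ hq, ?_⟩
    rw [Sminus.deriv_at_fixedPoint_eq]
    refine Icc_subset_Icc ?_ ?_ (div_add_sqrt_sq_add_eight_mem_Icc (by linarith) hc₁) <;>
      linarith [inv_nonneg.2 (pow_nonneg (by norm_num : (0 : ℝ) ≤ 4) m)]
  · refine squeeze_zero (g := fun m => ((4 : ℝ) ^ m * β m) ^ 2)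
      (fun m => mul_nonneg (by positivity) (Sminus.fixedPoint_mem_Icc (Real.cos_le_one _)).1)
      (fun m => ?_) (by simpa using hβ.pow 2)
    calc (16 : ℝ) ^ m * Sminus.fixedPoint (Real.cos (2 * β m)) ≤ 16 ^ m * β m ^ 2 := by
          gcongr; exact Sminus.fixedPoint_cos_two_mul_le _
      _ = ((4 : ℝ) ^ m * β m) ^ 2 := by
          rw [mul_pow, ← pow_mul, mul_comm m, pow_mul]; norm_num
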